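/- arXiv:2510.10204 — 2 statements merged into one kernel-verified Lean document; each statement's English description precedes it below -/
import Mathlib

section
/- Simultaneous shift of μ and ν by a dual vector: for every m_d ∈ Λ_d* one has Φ_{μ+m_d,ν+m_d}(τ,u,v,{d_r}) = e^{2πi B(m_d,u)} · Φ_{μ,ν}(τ, u, v+m_d τ, {d_r}). -/
open scoped BigOperators Real
open Complex

/-! Shifting `μ` and `ν` by the same vector leaves `k + μ - ν` unchanged, so the denominators
and the quadratic part of the summand are untouched; the prefactor picks up `e^{2πi B(m_d,u)}`,
and the change `2πiτ B(m_d, k+μ-ν)` of the linear part is absorbed by replacing `v` with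
`v + m_d τ`. -/

/-- The complex bilinear form `B(x,y) = xᵀ 𝐀 y` attached to an integer matrix `𝐀`,
extended bilinearly to `ℂ^N`. -/
noncomputable def bilC {N : ℕ} (A : Matrix (Fin N) (Fin N) ℤ) (x y : Fin N → ℂ) : ℂ :=
  ∑ i, ∑ j, x i * (A i j : ℂ) * y j

/-- The real bilinear form `B(x,y) = xᵀ 𝐀 y`. -/
noncomputable def bilR {N : ℕ} (A : Matrix (Fin N) (Fin N) ℤ) (x y : Fin N → ℝ) : ℝ :=
  ∑ i, ∑ j, x i * (A i j : ℝ) * y j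

/-- The generalized Appell function `Φ_{μ,ν}(τ,u,v,{d_r})`:
`e^{2πi B(ν,u)} · Σ_{k ∈ ℤ^N} e^{πiτ Q(k+μ−ν) + 2πiτ B(ν,k+μ−ν) + 2πi B(v,k+μ−ν)}
  / ∏_{r=1}^M (1 − e^{2πi B(d_r,u)} e^{2πiτ B(d_r,k+μ−ν)})`. -/
noncomputable def appellPhi {N M : ℕ} (A : Matrix (Fin N) (Fin N) ℤ)
    (d : Fin M → Fin N → ℤ) (τ : ℂ) (u v : Fin N → ℂ) (μ ν : Fin N → ℝ) : ℂ :=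
  Complex.exp (2 * (π : ℂ) * I * bilC A (fun i => (ν i : ℂ)) u) *
  ∑' k : Fin N → ℤ,
    Complex.exp ((π : ℂ) * I * τ *
        bilC A (fun i => (k i : ℂ) + (μ i : ℂ) - (ν i : ℂ))
               (fun i => (k i : ℂ) + (μ i : ℂ) - (ν i : ℂ))
      + 2 * (π : ℂ) * I * τ *
        bilC A (fun i => (ν i : ℂ)) (fun i => (k i : ℂ) + (μ i : ℂ) - (ν i : ℂ))
      + 2 * (π : ℂ) * I *
        bilC A v (fun i => (k i : ℂ) + (μ i : ℂ) - (ν i : ℂ))) /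
    ∏ r, (1 - Complex.exp (2 * (π : ℂ) * I * bilC A (fun i => (d r i : ℂ)) u) *
      Complex.exp (2 * (π : ℂ) * I * τ *
        bilC A (fun i => (d r i : ℂ)) (fun i => (k i : ℂ) + (μ i : ℂ) - (ν i : ℂ))))

lemma bilC_add_left {N : ℕ} (A : Matrix (Fin N) (Fin N) ℤ) (x y z : Fin N → ℂ) :
    bilC A (fun i => x i + y i) z = bilC A x z + bilC A y z := by
  simp only [bilC, add_mul, Finset.sum_add_distrib]

lemma bilC_mul_const_left {N : ℕ} (A : Matrix (Fin N) (Fin N) ℤ) (x y : Fin N → ℂ) (c : ℂ) :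
    bilC A (fun i => x i * c) y = bilC A x y * c := by
  simp only [bilC, Finset.sum_mul]
  exact Finset.sum_congr rfl fun i _ => Finset.sum_congr rfl fun j _ => by ring

theorem appellPhi_simultaneous_shift_general
    {N M : ℕ}
    (A : Matrix (Fin N) (Fin N) ℤ)
    (d : Fin M → Fin N → ℤ)
    (τ : ℂ) (u v : Fin N → ℂ)
    (μ ν : Fin N → ℝ)
    (md : Fin N → ℝ) :
    appellPhi A d τ u v (fun i => μ i + md i) (fun i => ν i + md i) =
      Complex.exp (2 * (π : ℂ) * I * bilC A (fun i => (md i : ℂ)) u) *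
        appellPhi A d τ u (fun i => v i + (md i : ℂ) * τ) μ ν := by
  have shift_cancels : ∀ k : Fin N → ℤ,
      (fun i => (k i : ℂ) + ((μ i + md i : ℝ) : ℂ) - ((ν i + md i : ℝ) : ℂ)) =
        fun i => (k i : ℂ) + (μ i : ℂ) - (ν i : ℂ) := fun k => by
    funext i; push_cast; ring
  have shifted_ν : (fun i => ((ν i + md i : ℝ) : ℂ)) = fun i => (ν i : ℂ) + (md i : ℂ) := by
    funext i; push_cast; rfl
  unfold appellPhi
  simp only [shift_cancels, shifted_ν]
  rw [← mul_assoc, ← Complex.exp_add, bilC_add_left]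
  congr 1
  · ring_nf
  · refine tsum_congr fun k => ?_
    rw [bilC_add_left, bilC_add_left, bilC_mul_const_left]
    ring_nf

/-- Simultaneous shift of `μ` and `ν` by a dual vector `m_d ∈ Λ_d*`
(an element of the ℝ-span of `d_1,…,d_M` with `B(d_r,m_d) ∈ ℤ` for all `r`):
`Φ_{μ+m_d,ν+m_d}(τ,u,v,{d_r}) = e^{2πi B(m_d,u)} · Φ_{μ,ν}(τ, u, v+m_d τ, {d_r})`. -/
theorem appellPhi_simultaneous_shift
    {N M : ℕ} (hN : 1 ≤ N) (hM : 1 ≤ M) (hMN : M ≤ N)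
    (A : Matrix (Fin N) (Fin N) ℤ) (hAsymm : A.IsSymm)
    (hApos : (A.map ((↑) : ℤ → ℝ)).PosDef)
    (d : Fin M → Fin N → ℤ)
    (hd : LinearIndependent ℝ (fun r => fun i => (d r i : ℝ)))
    (τ : ℂ) (hτ : 0 < τ.im) (u v : Fin N → ℂ)
    (μ ν : Fin N → ℝ)
    (hν : ν ∈ Submodule.span ℝ (Set.range (fun r => fun i => (d r i : ℝ))))
    (md : Fin N → ℝ)
    (hmd_span : md ∈ Submodule.span ℝ (Set.range (fun r => fun i => (d r i : ℝ))))
    (hmd_int : ∀ r : Fin M, ∃ z : ℤ, bilR A (fun i => (d r i : ℝ)) md = (z : ℝ)) :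
    appellPhi A d τ u v (fun i => μ i + md i) (fun i => ν i + md i) =
      Complex.exp (2 * (π : ℂ) * I * bilC A (fun i => (md i : ℂ)) u) *
        appellPhi A d τ u (fun i => v i + (md i : ℂ) * τ) μ ν :=
  appellPhi_simultaneous_shift_general A d τ u v μ ν md
end

section
/- Inversion formula for the generalized Appell function: Φ_{−μ,−ν}(τ,u,v,{d_r}) = (−1)^M · e^{−2πi B(Σ_{r=1}^M d_r, u)} · Φ_{μ,ν}(τ, −u, −v + τ·Σ_{r=1}^M d_r, {d_r}). -/
open scoped BigOperators Real
open Complex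

/-! Substituting `k ↦ -k` in the series defining `Φ_{-μ,-ν}` turns `k - μ + ν` into `-(k + μ - ν)`,
which leaves the quadratic term and `B(ν, ·)` unchanged. Each factor of the denominator is of the
form `1 - e^{x_r}` with `x_r = 2πi B(d_r, u) - 2πiτ B(d_r, k + μ - ν)`, and
`1 - e^{x} = -e^{x} (1 - e^{-x})`; the product of the `-e^{x_r}` gives the sign `(-1)^M`, the
prefactor `e^{-2πi B(Σ d_r, u)}` and the shift `v ↦ -v + τ Σ d_r`. The identity holds term by term,
so no convergence of the series is needed. -/

lemma one_sub_exp_eq_neg_exp_mul (x : ℂ) : 1 - exp x = -exp x * (1 - exp (-x)) := by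
  rw [mul_sub, mul_one, neg_mul, ← exp_add, add_neg_cancel, exp_zero]
  ring

lemma prod_one_sub_exp_eq {ι : Type*} (s : Finset ι) (x : ι → ℂ) :
    ∏ r ∈ s, (1 - exp (x r)) =
      (-1) ^ s.card * exp (∑ r ∈ s, x r) * ∏ r ∈ s, (1 - exp (-x r)) := by
  simp_rw [one_sub_exp_eq_neg_exp_mul (x _), Finset.prod_mul_distrib, Finset.prod_neg, exp_sum]

lemma exp_div_prod_one_sub_exp {ι : Type*} (s : Finset ι) (E : ℂ) (x : ι → ℂ) :
    exp E / ∏ r ∈ s, (1 - exp (x r)) =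
      (-1) ^ s.card * (exp (E - ∑ r ∈ s, x r) / ∏ r ∈ s, (1 - exp (-x r))) := by
  rw [prod_one_sub_exp_eq, exp_sub]
  field_simp
  rw [← pow_mul, pow_mul', neg_one_sq, one_pow]

lemma bilC_eq_toBilin' {N : ℕ} (A : Matrix (Fin N) (Fin N) ℤ) (x y : Fin N → ℂ) :
    bilC A x y = Matrix.toBilin' (A.map ((↑) : ℤ → ℂ)) x y := by
  simp [bilC, Matrix.toBilin'_apply', dotProduct, Matrix.mulVec, Finset.mul_sum, mul_assoc]

section AppellSummand

variable {N M : ℕ} (A : Matrix (Fin N) (Fin N) ℤ)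

noncomputable def appellSummand (d : Fin M → Fin N → ℂ) (τ : ℂ) (u v ν w : Fin N → ℂ) : ℂ :=
  exp (π * I * τ * bilC A w w + 2 * π * I * τ * bilC A ν w + 2 * π * I * bilC A v w) /
    ∏ r, (1 - exp (2 * π * I * bilC A (d r) u) * exp (2 * π * I * τ * bilC A (d r) w))

lemma appellPhi_eq_tsum_appellSummand (d : Fin M → Fin N → ℤ) (τ : ℂ) (u v : Fin N → ℂ)
    (μ ν : Fin N → ℝ) :
    appellPhi A d τ u v μ ν = exp (2 * π * I * bilC A (fun i => (ν i : ℂ)) u) *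
      ∑' k : Fin N → ℤ, appellSummand A (fun r i => (d r i : ℂ)) τ u v (fun i => (ν i : ℂ))
        (fun i => k i + μ i - ν i) :=
  rfl

lemma appellSummand_neg (d : Fin M → Fin N → ℂ) (τ : ℂ) (u v ν w : Fin N → ℂ) :
    appellSummand A d τ u v (-ν) (-w) =
      (-1) ^ M * exp (-(2 * π * I * bilC A (∑ r, d r) u)) *
        appellSummand A d τ (-u) (-v + τ • ∑ r, d r) ν w := by
  set x : Fin M → ℂ := fun r => 2 * π * I * bilC A (d r) u - 2 * π * I * τ * bilC A (d r) w
  have hx : ∀ r, 1 - exp (2 * π * I * bilC A (d r) u) * exp (2 * π * I * τ * bilC A (d r) (-w))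
      = 1 - exp (x r) := by
    intro r
    rw [← exp_add]
    simp only [x, bilC_eq_toBilin', map_neg, mul_neg, sub_eq_add_neg]
  have hx_neg : ∀ r, 1 - exp (2 * π * I * bilC A (d r) (-u)) * exp (2 * π * I * τ * bilC A (d r) w)
      = 1 - exp (-x r) := by
    intro r
    rw [← exp_add]
    simp only [x, bilC_eq_toBilin', map_neg, neg_sub]
    ring_nf
  unfold appellSummand
  simp_rw [hx, hx_neg]
  rw [exp_div_prod_one_sub_exp, Finset.card_univ, Fintype.card_fin, mul_assoc ((-1 : ℂ) ^ M),
    ← mul_div_assoc (exp _), ← exp_add]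
  congr 3
  simp only [x, bilC_eq_toBilin', map_neg, map_add, map_smul, map_sum, LinearMap.neg_apply,
    LinearMap.add_apply, LinearMap.smul_apply, LinearMap.sum_apply, smul_eq_mul, neg_neg,
    Finset.sum_sub_distrib, ← Finset.mul_sum]
  ring

end AppellSummand

theorem appellPhi_inversion_general
    {N M : ℕ}
    (A : Matrix (Fin N) (Fin N) ℤ)
    (d : Fin M → Fin N → ℤ)
    (τ : ℂ) (u v : Fin N → ℂ)
    (μ ν : Fin N → ℝ) :
    appellPhi A d τ u v (fun i => -μ i) (fun i => -ν i) =
      (-1 : ℂ) ^ M *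
      Complex.exp (-(2 * (π : ℂ) * I *
        bilC A (fun i => ((∑ r, d r i : ℤ) : ℂ)) u)) *
      appellPhi A d τ (fun i => -u i)
        (fun i => -v i + τ * ((∑ r, d r i : ℤ) : ℂ)) μ ν := by
  have hu : (fun i => -u i) = -u := rfl
  have hν : (fun i => ((-ν i : ℝ) : ℂ)) = -fun i => (ν i : ℂ) := by
    ext; simp
  have hk : ∀ k : Fin N → ℤ, (fun i => ((-k i : ℤ) : ℂ) + ((-μ i : ℝ) : ℂ) - ((-ν i : ℝ) : ℂ)) =
      -fun i => (k i : ℂ) + μ i - ν i := by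
    intro k; ext; simp only [Pi.neg_apply]; push_cast; ring
  have hdsum : (fun i => ((∑ r, d r i : ℤ) : ℂ)) = ∑ r, fun i => (d r i : ℂ) := by
    ext; simp
  have hv : (fun i => -v i + τ * ((∑ r, d r i : ℤ) : ℂ)) = -v + τ • ∑ r, fun i => (d r i : ℂ) := by
    ext; simp
  rw [appellPhi_eq_tsum_appellSummand, appellPhi_eq_tsum_appellSummand,
    ← (Equiv.neg (Fin N → ℤ)).tsum_eq]
  simp only [Equiv.neg_apply, Pi.neg_apply, hk, hu, hν, hv, hdsum]
  simp only [appellSummand_neg, tsum_mul_left, bilC_eq_toBilin', map_neg, LinearMap.neg_apply]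
  ring

/-- Inversion formula for the generalized Appell function:
`Φ_{−μ,−ν}(τ,u,v,{d_r})
  = (−1)^M · e^{−2πi B(Σ_r d_r, u)} · Φ_{μ,ν}(τ, −u, −v + τ·Σ_r d_r, {d_r})`. -/
theorem appellPhi_inversion
    {N M : ℕ} (hN : 1 ≤ N) (hM : 1 ≤ M) (hMN : M ≤ N)
    (A : Matrix (Fin N) (Fin N) ℤ) (hAsymm : A.IsSymm)
    (hApos : (A.map ((↑) : ℤ → ℝ)).PosDef)
    (d : Fin M → Fin N → ℤ)
    (hd : LinearIndependent ℝ (fun r => fun i => (d r i : ℝ)))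
    (τ : ℂ) (hτ : 0 < τ.im) (u v : Fin N → ℂ)
    (μ ν : Fin N → ℝ)
    (hν : ν ∈ Submodule.span ℝ (Set.range (fun r => fun i => (d r i : ℝ)))) :
    appellPhi A d τ u v (fun i => -μ i) (fun i => -ν i) =
      (-1 : ℂ) ^ M *
      Complex.exp (-(2 * (π : ℂ) * I *
        bilC A (fun i => ((∑ r, d r i : ℤ) : ℂ)) u)) *
      appellPhi A d τ (fun i => -u i)
        (fun i => -v i + τ * ((∑ r, d r i : ℤ) : ℂ)) μ ν :=
  appellPhi_inversion_general A d τ u v μ ν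
end
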